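/- arXiv:1710.06399 — 2 statements merged into one kernel-verified Lean document; each statement's English description precedes it below -/
import Mathlib

section
/- Let n ≥ 3 be an integer and let m > 1, ν > 1, K₂ > 0. Let ρ : ℝⁿ → (0,∞) be a measurable function satisfying ρ(x) ≤ K₂·|x|^{−2}·(log|x|)^{−ν} for all |x| ≥ 2. Then for every C > 0 with C^{m−1} > K₂/(m·(ν−1)·(n−2)) there exists R > 2 such that the function W(x) := C·(log|x|)^{−(ν−1)/(m−1)} satisfies Δ(W^m)(x) + ρ(x)·W(x)/(m−1) ≤ 0 for all x with |x| > R. -/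
/-! Write `L = log ‖x‖` and `p = -(ν-1)/(m-1)`, so that `W ^ m = C ^ m * L ^ (p * m)`.
For a function of `‖x‖²`, `Δ (F (‖x‖²)) = 2 n F' + 4 ‖x‖² F''`, which for this profile gives
`Δ (W ^ m) = C ^ m p m ((n-2) L ^ (p m - 1) + (p m - 1) L ^ (p m - 2)) / ‖x‖²`.
Because `p - ν = p m - 1`, the weight term is bounded by `K₂ C L ^ (p m - 1) / ((m-1) ‖x‖²)`,
of the same order as the leading part of the Laplacian. The sum is then at most
`L ^ (p m - 2) (P - δ L) / ‖x‖²`, where `P = C ^ m p m (p m - 1)` and `δ > 0` exactly when `C ^ (m-1) > K₂ / (m (ν-1) (n-2))`,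
hence nonpositive once `L ≥ P / δ`. -/

open Real Filter Set MeasureTheory

/-- The Euclidean Laplacian of a scalar function, as the sum of second directional
derivatives along the standard orthonormal basis of `ℝⁿ`. -/
noncomputable def euclideanLaplacian (n : ℕ) (φ : EuclideanSpace ℝ (Fin n) → ℝ)
    (x : EuclideanSpace ℝ (Fin n)) : ℝ :=
  ∑ i : Fin n, fderiv ℝ (fun y => fderiv ℝ φ y (EuclideanSpace.single i 1)) x
    (EuclideanSpace.single i 1)

open Topology

theorem euclideanLaplacian_congr {n : ℕ} {φ ψ : EuclideanSpace ℝ (Fin n) → ℝ}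
    {x : EuclideanSpace ℝ (Fin n)} (h : φ =ᶠ[𝓝 x] ψ) :
    euclideanLaplacian n φ x = euclideanLaplacian n ψ x := by
  refine Finset.sum_congr rfl fun i _ => ?_
  have hfderiv : (fun y => fderiv ℝ φ y (EuclideanSpace.single i 1)) =ᶠ[𝓝 x]
      fun y => fderiv ℝ ψ y (EuclideanSpace.single i 1) := by
    filter_upwards [h.eventuallyEq_nhds] with y hy
    rw [hy.fderiv_eq]
  rw [hfderiv.fderiv_eq]

theorem euclideanLaplacian_comp_norm_sq {n : ℕ} {F F' : ℝ → ℝ} {F'' : ℝ}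
    {x : EuclideanSpace ℝ (Fin n)} (hF : ∀ᶠ s in 𝓝 (‖x‖ ^ 2), HasDerivAt F (F' s) s)
    (hF' : HasDerivAt F' F'' (‖x‖ ^ 2)) :
    euclideanLaplacian n (fun y => F (‖y‖ ^ 2)) x = 2 * n * F' (‖x‖ ^ 2) + 4 * ‖x‖ ^ 2 * F'' := by
  have hsq (y : EuclideanSpace ℝ (Fin n)) :
      HasFDerivAt (fun y => ‖y‖ ^ 2) (2 • innerSL ℝ y) y :=
    (hasStrictFDerivAt_norm_sq y).hasFDerivAt
  have hF_near : ∀ᶠ y in 𝓝 x, HasDerivAt F (F' (‖y‖ ^ 2)) (‖y‖ ^ 2) :=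
    ((continuous_norm.pow 2).tendsto x).eventually hF
  have hfirst (i : Fin n) :
      (fun y => fderiv ℝ (fun y => F (‖y‖ ^ 2)) y (EuclideanSpace.single i 1)) =ᶠ[𝓝 x]
        fun y => F' (‖y‖ ^ 2) * (2 * y i) := by
    filter_upwards [hF_near] with y hy
    rw [show fderiv ℝ (fun y => F (‖y‖ ^ 2)) y = _ from (hy.comp_hasFDerivAt y (hsq y)).fderiv]
    simp [EuclideanSpace.inner_single_right]
  have hsecond (i : Fin n) :
      HasFDerivAt (fun y => F' (‖y‖ ^ 2) * (2 * y i))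
        (F' (‖x‖ ^ 2) • ((2 : ℝ) • PiLp.proj 2 _ i) + (2 * x i) • (F'' • 2 • innerSL ℝ x)) x :=
    (hF'.comp_hasFDerivAt x (hsq x)).mul ((PiLp.hasFDerivAt_apply 2 x i).const_mul 2)
  unfold euclideanLaplacian
  simp_rw [(hfirst _).fderiv_eq, (hsecond _).fderiv]
  have hnorm : ‖x‖ ^ 2 = ∑ i, x i ^ 2 := by simp [EuclideanSpace.norm_sq_eq]
  simp only [add_apply, smul_apply, smul_eq_mul, nsmul_eq_mul, PiLp.proj_apply,
    innerSL_apply_apply, EuclideanSpace.inner_single_right, PiLp.single_eq_same,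
    conj_trivial, one_mul]
  rw [Finset.sum_congr rfl fun i _ => show _ = 2 * F' (‖x‖ ^ 2) + x i ^ 2 * (4 * F'') by ring,
    Finset.sum_add_distrib, ← Finset.sum_mul, ← Finset.sum_mul, ← hnorm]
  simp
  ring

theorem hasDerivAt_half_log_rpow (p : ℝ) {s : ℝ} (hs : 1 < s) :
    HasDerivAt (fun s => (log s / 2) ^ p) (p * (log s / 2) ^ (p - 1) / (2 * s)) s := by
  have hlog : HasDerivAt (fun s => log s / 2) (s⁻¹ / 2) s :=
    (hasDerivAt_log (by positivity)).div_const 2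
  refine (hlog.rpow_const (Or.inl (by linarith [log_pos hs]))).congr_deriv ?_
  field_simp

theorem euclideanLaplacian_const_mul_log_norm_rpow {n : ℕ} (A p : ℝ)
    {x : EuclideanSpace ℝ (Fin n)} (hx : 1 < ‖x‖) :
    euclideanLaplacian n (fun y => A * log ‖y‖ ^ p) x =
      A * p * ((n - 2) * log ‖x‖ ^ (p - 1) + (p - 1) * log ‖x‖ ^ (p - 2)) / ‖x‖ ^ 2 := by
  have hlog (r : ℝ) : log r = log (r ^ 2) / 2 := by
    rw [Real.log_pow]
    ring
  have hF (s : ℝ) (hs : 1 < s) : HasDerivAt (fun s => A * (log s / 2) ^ p)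
      (A * p * ((log s / 2) ^ (p - 1) / (2 * s))) s :=
    ((hasDerivAt_half_log_rpow p hs).const_mul A).congr_deriv (by ring)
  have hx2 : 1 < ‖x‖ ^ 2 := by nlinarith
  have hF' := (((hasDerivAt_half_log_rpow (p - 1) hx2).div
    ((hasDerivAt_id _).const_mul 2) (by positivity)).const_mul (A * p))
  have hW : (fun y : EuclideanSpace ℝ (Fin n) => A * log ‖y‖ ^ p) =
      fun y => A * (log (‖y‖ ^ 2) / 2) ^ p := by
    simp only [← hlog]
  rw [hW, euclideanLaplacian_comp_norm_sq ((lt_mem_nhds hx2).mono hF) hF', ← hlog,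
    show p - 1 - 1 = p - 2 by ring]
  simp only [id_eq]
  field_simp
  ring

theorem exists_log_threshold_supersolution {d m ν K₂ C p : ℝ} (hd : 2 < d) (hm : 1 < m)
    (hν : 1 < ν) (hC : 0 < C) (hCgt : K₂ / (m * (ν - 1) * (d - 2)) < C ^ (m - 1))
    (hp : p * (m - 1) = 1 - ν) :
    ∃ L₀, ∀ L, 0 < L → L₀ ≤ L → ∀ r w, 0 < r → w ≤ K₂ / (r ^ 2 * L ^ ν) →
      C ^ m * (p * m) * ((d - 2) * L ^ (p * m - 1) + (p * m - 1) * L ^ (p * m - 2)) / r ^ 2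
        + w * (C * L ^ p) / (m - 1) ≤ 0 := by
  have hm1 : 0 < m - 1 := by linarith
  set δ := C * (C ^ (m - 1) * (m * (ν - 1) * (d - 2)) - K₂) / (m - 1) with hδ_def
  have hδ : 0 < δ := by
    have hden : 0 < m * (ν - 1) * (d - 2) := by
      have : 0 < ν - 1 := by linarith
      have : 0 < d - 2 := by linarith
      positivity
    have := (div_lt_iff₀ hden).1 hCgt
    exact div_pos (mul_pos hC (by linarith)) hm1
  set P := C ^ m * (p * m) * (p * m - 1) with hP_def
  refine ⟨P / δ, fun L hL hL₀ r w hr hw => ?_⟩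
  have hLp : L ^ p = L ^ (p * m - 2) * L * L ^ ν := by
    rw [← rpow_add_one hL.ne', ← rpow_add hL]
    congr 1
    linear_combination -hp
  have hCm : C ^ m = C ^ (m - 1) * C := by
    rw [← rpow_add_one hC.ne']
    ring_nf
  have hLpm : L ^ (p * m - 1) = L ^ (p * m - 2) * L := by
    rw [← rpow_add_one hL.ne']
    ring_nf
  have hweight : w * (C * L ^ p) / (m - 1) ≤ K₂ / (r ^ 2 * L ^ ν) * (C * L ^ p) / (m - 1) := by
    gcongr
  have hid : C ^ m * (p * m) * ((d - 2) * L ^ (p * m - 1) + (p * m - 1) * L ^ (p * m - 2)) / r ^ 2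
      + K₂ / (r ^ 2 * L ^ ν) * (C * L ^ p) / (m - 1) = L ^ (p * m - 2) * (P - δ * L) / r ^ 2 := by
    rw [hLp, hLpm, hP_def, hCm, hδ_def]
    field_simp
    linear_combination (m * C ^ (m - 1) * (d - 2) * L) * hp
  have hPδ : P - δ * L ≤ 0 := by
    have := (div_le_iff₀ hδ).1 hL₀
    linarith
  calc _ ≤ _ := add_le_add_right hweight _
    _ = _ := hid
    _ ≤ 0 := div_nonpos_of_nonpos_of_nonneg
      (mul_nonpos_of_nonneg_of_nonpos (by positivity) hPδ) (by positivity)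

theorem stmt_17_general (n : ℕ) (hn : 3 ≤ n) (m ν K₂ : ℝ)
    (hm : 1 < m) (hν : 1 < ν)
    (ρ : EuclideanSpace ℝ (Fin n) → ℝ)
    (hρup : ∀ x, 2 ≤ ‖x‖ → ρ x ≤ K₂ / (‖x‖ ^ 2 * (Real.log ‖x‖) ^ ν)) :
    ∀ C : ℝ, 0 < C → K₂ / (m * (ν - 1) * ((n:ℝ) - 2)) < C ^ (m - 1) →
      ∃ R > (2:ℝ), ∀ x : EuclideanSpace ℝ (Fin n), R < ‖x‖ →
        euclideanLaplacian n
            (fun y => (C * (Real.log ‖y‖) ^ (-(ν - 1) / (m - 1))) ^ m) x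
          + ρ x * (C * (Real.log ‖x‖) ^ (-(ν - 1) / (m - 1))) / (m - 1) ≤ 0 := by
  intro C hC hCgt
  set p := -(ν - 1) / (m - 1)
  have hp : p * (m - 1) = 1 - ν := by
    rw [div_mul_cancel₀ _ (by linarith)]
    ring
  have hd : (2 : ℝ) < n := by exact_mod_cast hn
  obtain ⟨L₀, hL₀⟩ := exists_log_threshold_supersolution hd hm hν hC hCgt hp
  refine ⟨max 3 (exp L₀), lt_max_of_lt_left (by norm_num), fun x hx => ?_⟩
  have hx3 : 3 < ‖x‖ := (le_max_left _ _).trans_lt hx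
  have hlog : L₀ ≤ log ‖x‖ :=
    ((lt_log_iff_exp_lt (by linarith)).2 ((le_max_right _ _).trans_lt hx)).le
  have hW : (fun y : EuclideanSpace ℝ (Fin n) => (C * log ‖y‖ ^ p) ^ m) =ᶠ[𝓝 x]
      fun y => C ^ m * log ‖y‖ ^ (p * m) := by
    filter_upwards [(isOpen_lt continuous_const continuous_norm).mem_nhds
      (show 1 < ‖x‖ by linarith)] with y (hy : 1 < ‖y‖)
    rw [mul_rpow hC.le (rpow_nonneg (log_nonneg hy.le) _), ← rpow_mul (log_nonneg hy.le)]
  rw [euclideanLaplacian_congr hW, euclideanLaplacian_const_mul_log_norm_rpow _ _ (by linarith)]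
  exact hL₀ _ (log_pos (by linarith)) hlog _ _ (by linarith) (hρup x (by linarith))

/-- Supersolution of the weighted sublinear elliptic equation in `ℝⁿ` (behind the sharp
upper asymptotics (4.6) of Theorem 4.1 (ii)): for a weight bounded above by
`K₂ |x|^{-2}(log|x|)^{-ν}`, every `C` with `C^{m-1} > K₂/(m(ν-1)(n-2))` makes
`W(x) = C (log|x|)^{-(ν-1)/(m-1)}` satisfy `Δ(W^m) + ρ W/(m-1) ≤ 0` outside a large ball. -/
theorem stmt_17 (n : ℕ) (hn : 3 ≤ n) (m ν K₂ : ℝ)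
    (hm : 1 < m) (hν : 1 < ν) (hK₂ : 0 < K₂)
    (ρ : EuclideanSpace ℝ (Fin n) → ℝ) (hρmeas : Measurable ρ) (hρpos : ∀ x, 0 < ρ x)
    (hρup : ∀ x, 2 ≤ ‖x‖ → ρ x ≤ K₂ / (‖x‖ ^ 2 * (Real.log ‖x‖) ^ ν)) :
    ∀ C : ℝ, 0 < C → K₂ / (m * (ν - 1) * ((n:ℝ) - 2)) < C ^ (m - 1) →
      ∃ R > (2:ℝ), ∀ x : EuclideanSpace ℝ (Fin n), R < ‖x‖ →
        euclideanLaplacian n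
            (fun y => (C * (Real.log ‖y‖) ^ (-(ν - 1) / (m - 1))) ^ m) x
          + ρ x * (C * (Real.log ‖x‖) ^ (-(ν - 1) / (m - 1))) / (m - 1) ≤ 0 :=
  stmt_17_general n hn m ν K₂ hm hν ρ hρup
end

section
/- Let n ≥ 3 be an integer and let m > 1, ν > 1, K₁ > 0. Let ρ : ℝⁿ → (0,∞) be a measurable function satisfying ρ(x) ≥ K₁·|x|^{−2}·(log|x|)^{−ν} for all |x| ≥ 2. Then for every C > 0 with C^{m−1} < K₁/(m·(ν−1)·(n−2)) there exists R > 2 (independent of δ) such that for every δ > 0 the function V(x) := C·[(log|x|)^{−(ν−1)} − δ]₊^{1/(m−1)} satisfies Δ(V^m)(x) + ρ(x)·V(x)/(m−1) ≥ 0 at every x with |x| > R and (log|x|)^{−(ν−1)} > δ. -/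
open Real Filter Set MeasureTheory

/-!
Write `V^m = h(log |x|)`. For a function of `t = log |x|` the Laplacian in `ℝⁿ` is
`(h'' + (n - 2) h') / |x|²`. On the positivity set the profile
`h(t) = C^m (t^{-(ν-1)} - δ)^{m/(m-1)}` is convex, so
`Δ(V^m) ≥ (n - 2) h' / |x|² = -m (ν-1) (n-2) C^{m-1} V / ((m-1) |x|² (log |x|)^ν)`,
which the lower bound `ρ V / (m-1) ≥ K₁ V / ((m-1) |x|² (log |x|)^ν)` compensates exactly
when `C^{m-1} m (ν-1) (n-2) ≤ K₁`. This holds on all of `|x| ≥ 2`, so any `R > 2` works.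
-/

open Topology

section RadialLaplacian

variable {F : Type*} [NormedAddCommGroup F] [InnerProductSpace ℝ F]

theorem hasFDerivAt_log_norm {x : F} (hx : x ≠ 0) :
    HasFDerivAt (fun y => log ‖y‖) ((‖x‖ ^ 2)⁻¹ • innerSL ℝ x) x := by
  have hlog : (fun y : F => log ‖y‖) = fun y => log (‖y‖ ^ 2) * 2⁻¹ := by
    funext y
    rw [Real.log_pow]
    push_cast
    ring
  rw [hlog]
  refine (((hasStrictFDerivAt_norm_sq x).hasFDerivAt.log (by positivity)).mul_const
    (2⁻¹ : ℝ)).congr_fderiv ?_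
  ext v
  simp only [smul_apply, coe_innerSL_apply, nsmul_eq_mul, Nat.cast_ofNat, smul_eq_mul]
  ring

theorem hasFDerivAt_inv_norm_sq {x : F} (hx : x ≠ 0) :
    HasFDerivAt (fun y => (‖y‖ ^ 2)⁻¹) (-(2 * ((‖x‖ ^ 2) ^ 2)⁻¹) • innerSL ℝ x) x := by
  refine ((hasDerivAt_inv (by positivity)).comp_hasFDerivAt x
    (hasStrictFDerivAt_norm_sq x).hasFDerivAt).congr_fderiv ?_
  ext v
  simp only [neg_smul, neg_apply, smul_apply, coe_innerSL_apply, nsmul_eq_mul, Nat.cast_ofNat,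
    smul_eq_mul]
  ring

end RadialLaplacian

theorem euclideanLaplacian_comp_log_norm {n : ℕ} {h h' : ℝ → ℝ} {h'' : ℝ}
    {x : EuclideanSpace ℝ (Fin n)} (hx : x ≠ 0)
    (hh : ∀ᶠ t in 𝓝 (log ‖x‖), HasDerivAt h (h' t) t)
    (hh' : HasDerivAt h' h'' (log ‖x‖)) :
    euclideanLaplacian n (fun y => h (log ‖y‖)) x
      = (h'' + ((n : ℝ) - 2) * h' (log ‖x‖)) / ‖x‖ ^ 2 := by
  set e : Fin n → EuclideanSpace ℝ (Fin n) := fun i => EuclideanSpace.single i 1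
  have hfirst : ∀ i, (fun y => fderiv ℝ (fun y => h (log ‖y‖)) y (e i))
      =ᶠ[𝓝 x] fun y => h' (log ‖y‖) * ((‖y‖ ^ 2)⁻¹ * y i) := by
    intro i
    filter_upwards [(hasFDerivAt_log_norm hx).continuousAt.eventually hh,
      eventually_ne_nhds hx] with y hy hy0
    have hd : HasFDerivAt (fun y => h (log ‖y‖)) _ y :=
      hy.comp_hasFDerivAt y (hasFDerivAt_log_norm hy0)
    rw [hd.fderiv]
    simp [e, EuclideanSpace.inner_single_right]
  have hsecond : ∀ i, fderiv ℝ (fun y => fderiv ℝ (fun y => h (log ‖y‖)) y (e i)) x (e i)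
      = (h'' - 2 * h' (log ‖x‖)) * x i ^ 2 / (‖x‖ ^ 2) ^ 2 + h' (log ‖x‖) / ‖x‖ ^ 2 := by
    intro i
    have hd : HasFDerivAt (fun y : EuclideanSpace ℝ (Fin n) =>
        h' (log ‖y‖) * ((‖y‖ ^ 2)⁻¹ * y i)) _ x :=
      (hh'.comp_hasFDerivAt x (hasFDerivAt_log_norm hx)).mul
        ((hasFDerivAt_inv_norm_sq hx).mul (EuclideanSpace.proj (𝕜 := ℝ) i).hasFDerivAt)
    rw [(hfirst i).fderiv_eq, hd.fderiv]
    simp only [e, Function.comp_apply, neg_smul, smul_neg, smul_add, add_apply, smul_apply,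
      PiLp.proj_apply, PiLp.single_eq_same, smul_eq_mul, mul_one, neg_apply, coe_innerSL_apply,
      EuclideanSpace.inner_single_right, ringHom_apply]
    ring
  simp only [euclideanLaplacian, e] at hsecond ⊢
  simp only [hsecond, Finset.sum_add_distrib, ← Finset.sum_div, ← Finset.mul_sum,
    ← EuclideanSpace.real_norm_sq_eq, Finset.sum_const, Finset.card_univ, Fintype.card_fin,
    nsmul_eq_mul]
  field_simp
  ring

section LogProfile

variable {a δ : ℝ}

theorem eventually_pos_and_lt_rpow_neg {t : ℝ} (ht : 0 < t) (hδ : δ < t ^ (-a)) :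
    ∀ᶠ s in 𝓝 t, 0 < s ∧ δ < s ^ (-a) :=
  (lt_mem_nhds ht).and
    ((Real.continuousAt_rpow_const t (-a) (Or.inl ht.ne')).eventually (lt_mem_nhds hδ))

theorem hasDerivAt_rpow_neg_sub_rpow {t q : ℝ} (ht : 0 < t) (hδ : δ < t ^ (-a)) :
    HasDerivAt (fun s => (s ^ (-a) - δ) ^ q)
      (-(q * a) * ((t ^ (-a) - δ) ^ (q - 1) * t ^ (-(a + 1)))) t := by
  refine (((Real.hasDerivAt_rpow_const (Or.inl ht.ne')).sub_const δ).rpow_const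
    (Or.inl (sub_pos.2 hδ).ne')).congr_deriv ?_
  rw [show -a - 1 = -(a + 1) by ring]
  ring

theorem hasDerivAt_rpow_neg_sub_rpow_mul_rpow {t p b : ℝ} (ht : 0 < t) (hδ : δ < t ^ (-a)) :
    HasDerivAt (fun s => (s ^ (-a) - δ) ^ p * s ^ (-b))
      (-(p * a * ((t ^ (-a) - δ) ^ (p - 1) * t ^ (-(a + 1))) * t ^ (-b)
        + b * (t ^ (-a) - δ) ^ p * t ^ (-b - 1))) t := by
  refine ((hasDerivAt_rpow_neg_sub_rpow ht hδ).mul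
    (Real.hasDerivAt_rpow_const (Or.inl ht.ne'))).congr_deriv ?_
  ring

/-- `V(x) = logProfile C δ (ν - 1) (1 / (m - 1)) (log |x|)`. -/
noncomputable def logProfile (C δ a p t : ℝ) : ℝ := C * max (t ^ (-a) - δ) 0 ^ p

theorem logProfile_of_lt {C p t : ℝ} (hδ : δ < t ^ (-a)) :
    logProfile C δ a p t = C * (t ^ (-a) - δ) ^ p := by
  rw [logProfile, max_eq_left (sub_pos.2 hδ).le]

theorem logProfile_rpow_eventuallyEq {C p m t : ℝ} (hC : 0 ≤ C) (ht : 0 < t)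
    (hδ : δ < t ^ (-a)) :
    (fun s => logProfile C δ a p s ^ m) =ᶠ[𝓝 t] fun s => C ^ m * (s ^ (-a) - δ) ^ (p * m) := by
  filter_upwards [eventually_pos_and_lt_rpow_neg ht hδ] with s ⟨_, hsδ⟩
  rw [logProfile_of_lt hsδ, Real.mul_rpow hC (Real.rpow_nonneg (sub_pos.2 hsδ).le _),
    ← Real.rpow_mul (sub_pos.2 hsδ).le]

theorem hasDerivAt_logProfile_rpow {C p m t : ℝ} (hC : 0 ≤ C) (hp : p * (m - 1) = 1)
    (ht : 0 < t) (hδ : δ < t ^ (-a)) :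
    HasDerivAt (fun s => logProfile C δ a p s ^ m)
      (-(p * m * a * C ^ m) * ((t ^ (-a) - δ) ^ p * t ^ (-(a + 1)))) t := by
  refine (((hasDerivAt_rpow_neg_sub_rpow (q := p * m) ht hδ).const_mul
    (C ^ m)).congr_of_eventuallyEq (logProfile_rpow_eventuallyEq hC ht hδ)).congr_deriv ?_
  rw [show p * m - 1 = p by linarith]
  ring

end LogProfile

theorem le_euclideanLaplacian_logProfile_rpow {n : ℕ} {C δ a m : ℝ} (hC : 0 < C) (ha : 0 ≤ a)
    (hm : 1 < m) {x : EuclideanSpace ℝ (Fin n)} (hx : 1 < ‖x‖) (hδ : δ < log ‖x‖ ^ (-a)) :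
    -(m * a * ((n : ℝ) - 2) / (m - 1) * C ^ (m - 1)) * logProfile C δ a (1 / (m - 1)) (log ‖x‖)
        / (‖x‖ ^ 2 * log ‖x‖ ^ (a + 1))
      ≤ euclideanLaplacian n (fun y => logProfile C δ a (1 / (m - 1)) (log ‖y‖) ^ m) x := by
  have ht : 0 < log ‖x‖ := log_pos hx
  have hp : 1 / (m - 1) * (m - 1) = 1 := by field_simp [(sub_pos.2 hm).ne']
  rw [euclideanLaplacian_comp_log_norm (norm_pos_iff.1 (by linarith))
    ((eventually_pos_and_lt_rpow_neg ht hδ).mono fun s hs =>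
      hasDerivAt_logProfile_rpow hC.le hp hs.1 hs.2)
    ((hasDerivAt_rpow_neg_sub_rpow_mul_rpow ht hδ).const_mul _), logProfile_of_lt hδ]
  set p := 1 / (m - 1)
  set w := log ‖x‖ ^ (-a) - δ
  set t := log ‖x‖
  have hconvex : 0 ≤ -(p * m * a * C ^ m) *
      -(p * a * (w ^ (p - 1) * t ^ (-(a + 1))) * t ^ (-(a + 1))
        + (a + 1) * w ^ p * t ^ (-(a + 1) - 1)) := by
    rw [neg_mul_neg]
    positivity
  have hdrift : ((n : ℝ) - 2) * (-(p * m * a * C ^ m) * (w ^ p * t ^ (-(a + 1)))) / ‖x‖ ^ 2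
      = -(m * a * ((n : ℝ) - 2) / (m - 1) * C ^ (m - 1)) * (C * w ^ p)
        / (‖x‖ ^ 2 * t ^ (a + 1)) := by
    rw [Real.rpow_neg ht.le, Real.rpow_sub_one hC.ne']
    field_simp
    simp only [p]
    ring
  rw [add_div, ← hdrift]
  linarith [div_nonneg hconvex (sq_nonneg ‖x‖)]

theorem stmt_18_general (n : ℕ) (hn : 3 ≤ n) (m ν K₁ : ℝ)
    (hm : 1 < m) (hν : 1 < ν)
    (ρ : EuclideanSpace ℝ (Fin n) → ℝ)
    (hρlow : ∀ x, 2 ≤ ‖x‖ → K₁ / (‖x‖ ^ 2 * (Real.log ‖x‖) ^ ν) ≤ ρ x) :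
    ∀ C : ℝ, 0 < C → C ^ (m - 1) < K₁ / (m * (ν - 1) * ((n:ℝ) - 2)) →
      ∃ R > (2:ℝ), ∀ δ > (0:ℝ), ∀ x : EuclideanSpace ℝ (Fin n), R < ‖x‖ →
        δ < (Real.log ‖x‖) ^ (-(ν - 1)) →
        0 ≤ euclideanLaplacian n
              (fun y => (C * (max ((Real.log ‖y‖) ^ (-(ν - 1)) - δ) 0)
                ^ (1 / (m - 1))) ^ m) x
            + ρ x * (C * (max ((Real.log ‖x‖) ^ (-(ν - 1)) - δ) 0)
                ^ (1 / (m - 1))) / (m - 1) := by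
  intro C hC hC2
  have hn' : (3 : ℝ) ≤ n := by exact_mod_cast hn
  have hKC : C ^ (m - 1) * (m * (ν - 1) * ((n : ℝ) - 2)) < K₁ :=
    (lt_div_iff₀ (mul_pos (mul_pos (by linarith) (by linarith)) (by linarith))).1 hC2
  refine ⟨3, by norm_num, fun δ _ x hx hδ => ?_⟩
  have hΔ := le_euclideanLaplacian_logProfile_rpow (n := n) hC (sub_pos.2 hν).le hm
    (by linarith) hδ
  rw [sub_add_cancel] at hΔ
  have hρ := hρlow x (by linarith)
  set V := logProfile C δ (ν - 1) (1 / (m - 1)) (log ‖x‖) with hV_def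
  have hV : 0 < V := by
    rw [hV_def, logProfile_of_lt hδ]
    exact mul_pos hC (Real.rpow_pos_of_pos (sub_pos.2 hδ) _)
  have hlog : 0 < log ‖x‖ := log_pos (by linarith)
  change 0 ≤ euclideanLaplacian n (fun y => logProfile C δ (ν - 1) (1 / (m - 1)) (log ‖y‖) ^ m) x
    + ρ x * V / (m - 1)
  calc (0 : ℝ) ≤ (K₁ - C ^ (m - 1) * (m * (ν - 1) * ((n : ℝ) - 2))) / (m - 1)
          * V / (‖x‖ ^ 2 * log ‖x‖ ^ ν) := by
        have := sub_pos.2 hm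
        have := sub_pos.2 hKC
        positivity
    _ = -(m * (ν - 1) * ((n : ℝ) - 2) / (m - 1) * C ^ (m - 1)) * V / (‖x‖ ^ 2 * log ‖x‖ ^ ν)
        + K₁ / (‖x‖ ^ 2 * log ‖x‖ ^ ν) * V / (m - 1) := by
        field_simp
        ring
    _ ≤ _ := by gcongr

/-- Subsolution of the weighted sublinear elliptic equation in `ℝⁿ` (behind the sharp
lower asymptotics (4.6) of Theorem 4.1 (ii)): for a weight bounded below by
`K₁ |x|^{-2}(log|x|)^{-ν}`, every `C` with `C^{m-1} < K₁/(m(ν-1)(n-2))` makes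
`V(x) = C [(log|x|)^{-(ν-1)} − δ]₊^{1/(m-1)}` satisfy `Δ(V^m) + ρ V/(m-1) ≥ 0` on its
positivity set outside a large ball, with the radius independent of `δ`. -/
theorem stmt_18 (n : ℕ) (hn : 3 ≤ n) (m ν K₁ : ℝ)
    (hm : 1 < m) (hν : 1 < ν) (hK₁ : 0 < K₁)
    (ρ : EuclideanSpace ℝ (Fin n) → ℝ) (hρmeas : Measurable ρ) (hρpos : ∀ x, 0 < ρ x)
    (hρlow : ∀ x, 2 ≤ ‖x‖ → K₁ / (‖x‖ ^ 2 * (Real.log ‖x‖) ^ ν) ≤ ρ x) :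
    ∀ C : ℝ, 0 < C → C ^ (m - 1) < K₁ / (m * (ν - 1) * ((n:ℝ) - 2)) →
      ∃ R > (2:ℝ), ∀ δ > (0:ℝ), ∀ x : EuclideanSpace ℝ (Fin n), R < ‖x‖ →
        δ < (Real.log ‖x‖) ^ (-(ν - 1)) →
        0 ≤ euclideanLaplacian n
              (fun y => (C * (max ((Real.log ‖y‖) ^ (-(ν - 1)) - δ) 0)
                ^ (1 / (m - 1))) ^ m) x
            + ρ x * (C * (max ((Real.log ‖x‖) ^ (-(ν - 1)) - δ) 0)
                ^ (1 / (m - 1))) / (m - 1) :=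
  stmt_18_general n hn m ν K₁ hm hν ρ hρlow
end
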